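/- Let Z ~ SVG(1,σ,0) (density p(x) = K_0(|x|/σ)/(πσ)). Then for every α with 0 < α/σ < 0.729, P(0 ≤ Z ≤ α) ≤ (2α/(πσ)) (1 + log(σ/α)). -/

import Mathlib

open MeasureTheory ProbabilityTheory Real

/-- The modified Bessel function of the second kind of order `0`,
`K_0(x) = ∫₀^∞ e^{-x cosh t} dt`. -/
noncomputable def besselK0 (x : ℝ) : ℝ :=
  ∫ t in Set.Ioi (0 : ℝ), Real.exp (-x * Real.cosh t)

/-!
For `0 < y ≤ 2`, splitting `K₀(y) = ∫₀^∞ e^{-y cosh t} dt` at `T = log (2 / y)` gives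
`K₀(y) ≤ log (2 / y) + e⁻¹`: the integrand is at most `1` on `(0, T]`, and beyond `T` it is at most
`e^{T - 1 - t}` because `y cosh t ≥ y eᵗ / 2 = e^{t - T} ≥ 1 + t - T`. Integrating the resulting
bound `log (2σ / x) + e⁻¹` for `K₀(x / σ)` over `[0, α]` gives `α (log 2 + e⁻¹ + 1 + log (σ / α))`,
and this is at most `2α (1 + log (σ / α))` because `log (σ / α) ≥ 1 - α / σ > 0.271`, while
`log 2 + e⁻¹ - 1 < 0.07`.
-/

open Set

noncomputable def svgDensity (σ x : ℝ) : ℝ := besselK0 (|x| / σ) / (π * σ)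

lemma half_exp_le_cosh (t : ℝ) : exp t / 2 ≤ cosh t := by
  rw [cosh_eq]
  linarith [exp_nonneg (-t)]

lemma integrableOn_exp_neg_mul_cosh {y : ℝ} (hy : 0 < y) :
    IntegrableOn (fun t => exp (-y * cosh t)) (Ioi 0) := by
  refine Integrable.mono' ((exp_neg_integrableOn_Ioi 0 (half_pos hy)).const_mul (exp (-(y / 2))))
    (by fun_prop) (ae_of_all _ fun t => ?_)
  rw [norm_of_nonneg (exp_nonneg _), ← exp_add]
  refine exp_le_exp.2 ?_
  have : (1 + t) / 2 ≤ cosh t := by linarith [half_exp_le_cosh t, add_one_le_exp t]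
  nlinarith

lemma besselK0_pos {y : ℝ} (hy : 0 < y) : 0 < besselK0 y := by
  have : NeZero (volume.restrict (Ioi (0 : ℝ))) := ⟨by simp⟩
  exact integral_exp_pos (integrableOn_exp_neg_mul_cosh hy)

lemma besselK0_antitoneOn : AntitoneOn besselK0 (Ioi 0) := by
  intro y hy y' _ hyy'
  refine setIntegral_mono (integrableOn_exp_neg_mul_cosh (lt_of_lt_of_le hy hyy'))
    (integrableOn_exp_neg_mul_cosh hy) fun t => exp_le_exp.2 ?_
  nlinarith [cosh_pos t]

lemma setIntegral_Ioi_log_exp_neg_mul_cosh_le {y : ℝ} (hy : 0 < y) :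
    ∫ t in Ioi (log (2 / y)), exp (-y * cosh t) ≤ exp (-1) := by
  set T := log (2 / y)
  have hdom : ∀ t, exp (-y * cosh t) ≤ exp (T - 1) * exp (-t) := fun t => by
    have hexp : exp (t - T) = y * (exp t / 2) := by
      rw [exp_sub, exp_log (by positivity)]
      field_simp
    rw [← exp_add, exp_le_exp]
    nlinarith [half_exp_le_cosh t, add_one_le_exp (t - T)]
  calc ∫ t in Ioi T, exp (-y * cosh t)
      ≤ ∫ t in Ioi T, exp (T - 1) * exp (-t) :=
        integral_mono_of_nonneg (ae_of_all _ fun _ => exp_nonneg _)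
          (by simpa using (exp_neg_integrableOn_Ioi T one_pos).const_mul (exp (T - 1)))
          (ae_of_all _ hdom)
    _ = exp (-1) := by
        rw [integral_const_mul, integral_exp_neg_Ioi, ← exp_add]
        ring_nf

lemma besselK0_le_log_add {y : ℝ} (hy : 0 < y) (hy2 : y ≤ 2) :
    besselK0 y ≤ log (2 / y) + exp (-1) := by
  set T := log (2 / y)
  have hT : 0 ≤ T := log_nonneg (by rw [le_div_iff₀ hy]; linarith)
  have hint := integrableOn_exp_neg_mul_cosh hy
  have hhead : ∫ t in Ioc 0 T, exp (-y * cosh t) ≤ T := by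
    calc ∫ t in Ioc 0 T, exp (-y * cosh t)
        ≤ ∫ _ in Ioc 0 T, (1 : ℝ) :=
          integral_mono_of_nonneg (ae_of_all _ fun _ => exp_nonneg _)
            (integrableOn_const (by simp)) (ae_of_all _ fun t =>
              exp_le_one_iff.2 (by nlinarith [cosh_pos t]))
      _ = T := by simp [hT]
  rw [besselK0, ← Ioc_union_Ioi_eq_Ioi hT, setIntegral_union (Ioc_disjoint_Ioi le_rfl)
    measurableSet_Ioi (hint.mono_set Ioc_subset_Ioi_self) (hint.mono_set (Ioi_subset_Ioi hT))]
  linarith [setIntegral_Ioi_log_exp_neg_mul_cosh_le hy]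

lemma svgDensity_le {σ x : ℝ} (hσ : 0 < σ) (hx : 0 < x) (hx2 : x ≤ 2 * σ) :
    svgDensity σ x ≤ (log (2 * σ) + exp (-1) - log x) / (π * σ) := by
  have hK := besselK0_le_log_add (div_pos hx hσ) (by rwa [div_le_iff₀ hσ])
  rw [div_div_eq_mul_div, log_div (by positivity) hx.ne'] at hK
  rw [svgDensity, abs_of_pos hx]
  gcongr
  linarith

lemma integral_log_two_mul_add_exp_neg_one_sub_log {σ α : ℝ} (hσ : 0 < σ) (hα : 0 < α) :
    ∫ x in (0 : ℝ)..α, (log (2 * σ) + exp (-1) - log x)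
      = α * (log 2 + exp (-1) + 1 + log (σ / α)) := by
  rw [intervalIntegral.integral_sub intervalIntegrable_const
    intervalIntegral.intervalIntegrable_log', integral_log, intervalIntegral.integral_const,
    log_mul two_ne_zero hσ.ne', log_div hσ.ne' hα.ne']
  simp only [sub_zero, smul_eq_mul, log_zero, mul_zero, add_zero]
  ring

lemma setLIntegral_svgDensity_Icc_le {σ α : ℝ} (hσ : 0 < σ) (hα : 0 < α) (hα2 : α ≤ 2 * σ) :
    ∫⁻ x in Icc 0 α, ENNReal.ofReal (svgDensity σ x)
      ≤ ENNReal.ofReal (α * (log 2 + exp (-1) + 1 + log (σ / α)) / (π * σ)) := by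
  set g : ℝ → ℝ := fun x => (log (2 * σ) + exp (-1) - log x) / (π * σ)
  have hg_nonneg : ∀ x ∈ Ioc 0 α, 0 ≤ g x := fun x hx => by
    have : log x ≤ log (2 * σ) := log_le_log hx.1 (hx.2.trans hα2)
    have := exp_nonneg (-1)
    exact div_nonneg (by linarith) (by positivity)
  have hg_int : IntegrableOn g (Ioc 0 α) :=
    ((intervalIntegrable_iff_integrableOn_Ioc_of_le hα.le).1
      (intervalIntegrable_const.sub intervalIntegral.intervalIntegrable_log')).div_const _
  calc ∫⁻ x in Icc 0 α, ENNReal.ofReal (svgDensity σ x)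
      = ∫⁻ x in Ioc 0 α, ENNReal.ofReal (svgDensity σ x) := setLIntegral_congr Ioc_ae_eq_Icc.symm
    _ ≤ ∫⁻ x in Ioc 0 α, ENNReal.ofReal (g x) := setLIntegral_mono' measurableSet_Ioc
        fun x hx => ENNReal.ofReal_le_ofReal (svgDensity_le hσ hx.1 (hx.2.trans hα2))
    _ = ENNReal.ofReal (∫ x in Ioc 0 α, g x) := (ofReal_integral_eq_lintegral_ofReal hg_int
        (ae_restrict_of_forall_mem measurableSet_Ioc hg_nonneg)).symm
    _ = _ := by
        rw [integral_div, ← intervalIntegral.integral_of_le hα.le,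
          integral_log_two_mul_add_exp_neg_one_sub_log hσ hα]

lemma withDensity_svgDensity_ne_zero {σ : ℝ} (hσ : 0 < σ) :
    volume.withDensity (fun x => ENNReal.ofReal (svgDensity σ x)) ≠ 0 := by
  intro h
  have hlb : ENNReal.ofReal (besselK0 1 / (π * σ)) * volume (Ioc 0 σ)
      ≤ volume.withDensity (fun x => ENNReal.ofReal (svgDensity σ x)) (Ioc 0 σ) := by
    rw [withDensity_apply _ measurableSet_Ioc, ← setLIntegral_const]
    refine setLIntegral_mono' measurableSet_Ioc fun x hx => ENNReal.ofReal_le_ofReal ?_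
    rw [svgDensity, abs_of_pos hx.1]
    gcongr
    exact besselK0_antitoneOn (div_pos hx.1 hσ) (mem_Ioi.2 one_pos) ((div_le_one hσ).2 hx.2)
  have hK : 0 < besselK0 1 / (π * σ) := div_pos (besselK0_pos one_pos) (by positivity)
  simp only [h, Measure.coe_zero, Pi.zero_apply, nonpos_iff_eq_zero, mul_eq_zero,
    ENNReal.ofReal_eq_zero, Real.volume_Ioc, sub_zero] at hlb
  exact hlb.elim hK.not_ge hσ.not_ge

lemma log_two_add_exp_neg_one_add_one_add_log_le {q : ℝ} (hq : 0 < q) (hq' : q < 0.729) :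
    log 2 + exp (-1) + 1 + log q⁻¹ ≤ 2 * (1 + log q⁻¹) := by
  have hlog : log q ≤ q - 1 := log_le_sub_one_of_pos hq
  rw [log_inv]
  linarith [log_two_lt_d9, exp_neg_one_lt_d9]

theorem svg_one_small_interval_bound_general
    {Ω : Type*} [MeasureSpace Ω]
    (σ : ℝ) (hσ : 0 < σ) (Z : Ω → ℝ)
    (hZ : Measure.map Z ℙ =
      volume.withDensity fun x => ENNReal.ofReal (besselK0 (|x| / σ) / (π * σ))) :
    ∀ α : ℝ, 0 < α / σ → α / σ < 0.729 →
      (ℙ {ω | 0 ≤ Z ω ∧ Z ω ≤ α}).toReal ≤ 2 * α / (π * σ) * (1 + Real.log (σ / α)) := by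
  intro α hασ hασ'
  have hα : 0 < α := (div_pos_iff_of_pos_right hσ).1 hασ
  have hZ : Measure.map Z ℙ = volume.withDensity (fun x => ENNReal.ofReal (svgDensity σ x)) := hZ
  -- `Measure.map` along a map that is not a.e.-measurable is `0`, so the nonzero law rules this out.
  have hAE : AEMeasurable Z ℙ := .of_map_ne_zero (hZ ▸ withDensity_svgDensity_ne_zero hσ)
  have hprob : ℙ {ω | 0 ≤ Z ω ∧ Z ω ≤ α}
      = ∫⁻ x in Icc 0 α, ENNReal.ofReal (svgDensity σ x) := by
    rw [← withDensity_apply _ measurableSet_Icc, ← hZ,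
      Measure.map_apply_of_aemeasurable hAE measurableSet_Icc]
    rfl
  have hασ_lt : α < σ := (div_lt_one hσ).1 (by linarith)
  have hL_nonneg : 0 ≤ log (σ / α) := log_nonneg ((one_le_div hα).2 hασ_lt.le)
  have hcoeff := log_two_add_exp_neg_one_add_one_add_log_le hασ hασ'
  rw [inv_div] at hcoeff
  rw [hprob]
  refine ENNReal.toReal_le_of_le_ofReal (by positivity)
    ((setLIntegral_svgDensity_Icc_le hσ hα (by linarith)).trans (ENNReal.ofReal_le_ofReal ?_))
  calc α * (log 2 + exp (-1) + 1 + log (σ / α)) / (π * σ)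
      = α / (π * σ) * (log 2 + exp (-1) + 1 + log (σ / α)) := by ring
    _ ≤ α / (π * σ) * (2 * (1 + log (σ / α))) := by gcongr
    _ = 2 * α / (π * σ) * (1 + log (σ / α)) := by ring

/-- For `Z ~ SVG(1,σ,0)`, i.e. with density `p(x) = K_0(|x|/σ)/(πσ)`:
if `0 < α/σ < 0.729` then `P(0 ≤ Z ≤ α) ≤ (2α/(πσ)) (1 + log(σ/α))`. -/
theorem svg_one_small_interval_bound
    {Ω : Type*} [MeasureSpace Ω] [IsProbabilityMeasure (ℙ : Measure Ω)]
    (σ : ℝ) (hσ : 0 < σ) (Z : Ω → ℝ)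
    (hZ : Measure.map Z ℙ =
      volume.withDensity fun x => ENNReal.ofReal (besselK0 (|x| / σ) / (π * σ))) :
    ∀ α : ℝ, 0 < α / σ → α / σ < 0.729 →
      (ℙ {ω | 0 ≤ Z ω ∧ Z ω ≤ α}).toReal ≤ 2 * α / (π * σ) * (1 + Real.log (σ / α)) :=
  svg_one_small_interval_bound_general σ hσ Z hZ
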